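/- arXiv:2301.09945 — 4 statements merged into one kernel-verified Lean document; each statement's English description precedes it below -/
import Mathlib

section
/- Let T be a triangle in the Euclidean plane ℝ², i.e., an affinely independent triple of points. Then the incenter of T coincides with the orthocenter of T if and only if T is equilateral, i.e., all three pairwise distances between the vertices of T are equal. -/
/-!
With side lengths `a, b, c` opposite `A, B, C`, the incenter is `I = (a A + b B + c C)/(a + b + c)`
and `⟪I - A, B - C⟫ = (b - c)(a² - (b + c)²) / (2(a + b + c))`. Since `a < b + c` for a
nondegenerate triangle, `I` lies on the altitude from `A` iff `b = c`. The orthocenter is the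
only point on two altitudes, hence `I` is the orthocenter iff it lies on the altitudes from `A` and `B`,
i.e. iff `b = c` and `c = a`.
-/

open EuclideanGeometry
open scoped RealInnerProductSpace

noncomputable section

/-- The incenter of a triangle (an affinely independent triple of points) in the
Euclidean plane, i.e. the center of its inscribed circle, given by its standard
barycentric expression: with vertices `A, B, C` and opposite side lengths
`a = dist B C`, `b = dist C A`, `c = dist A B`, it is
`(a • A + b • B + c • C) / (a + b + c)`. -/
def incenter (T : Affine.Triangle ℝ (EuclideanSpace ℝ (Fin 2))) :
    EuclideanSpace ℝ (Fin 2) :=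
  (dist (T.points 1) (T.points 2) / (dist (T.points 1) (T.points 2) +
      dist (T.points 2) (T.points 0) + dist (T.points 0) (T.points 1))) • T.points 0 +
    (dist (T.points 2) (T.points 0) / (dist (T.points 1) (T.points 2) +
      dist (T.points 2) (T.points 0) + dist (T.points 0) (T.points 1))) • T.points 1 +
    (dist (T.points 0) (T.points 1) / (dist (T.points 1) (T.points 2) +
      dist (T.points 2) (T.points 0) + dist (T.points 0) (T.points 1))) • T.points 2

section IncenterOf

variable {V : Type*} [NormedAddCommGroup V] [InnerProductSpace ℝ V]

/-- The expression defining `incenter`, for three points of any real inner product space. -/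
def incenterOf (A B C : V) : V :=
  (dist B C / (dist B C + dist C A + dist A B)) • A +
    (dist C A / (dist B C + dist C A + dist A B)) • B +
    (dist A B / (dist B C + dist C A + dist A B)) • C

theorem incenterOf_rotate (A B C : V) : incenterOf B C A = incenterOf A B C := by
  have hs : dist C A + dist A B + dist B C = dist B C + dist C A + dist A B := by ring
  rw [incenterOf, incenterOf, hs]
  abel

theorem incenterOf_sub_left (A B C : V) (hs : dist B C + dist C A + dist A B ≠ 0) :
    incenterOf A B C - A =
      (dist C A / (dist B C + dist C A + dist A B)) • (B - A) +
        (dist A B / (dist B C + dist C A + dist A B)) • (C - A) := by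
  rw [incenterOf]
  match_scalars <;> field_simp
  ring

theorem incenterOf_mem_affineSpan (A B C : V) (hs : dist B C + dist C A + dist A B ≠ 0) :
    incenterOf A B C ∈ affineSpan ℝ {A, B, C} := by
  have hA : A ∈ affineSpan ℝ {A, B, C} := mem_affineSpan ℝ (by simp)
  have hB : B ∈ affineSpan ℝ {A, B, C} := mem_affineSpan ℝ (by simp)
  have hC : C ∈ affineSpan ℝ {A, B, C} := mem_affineSpan ℝ (by simp)
  rw [← sub_add_cancel (incenterOf A B C) A, incenterOf_sub_left A B C hs]
  refine AffineSubspace.vadd_mem_of_mem_direction ?_ hA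
  exact add_mem (Submodule.smul_mem _ _ (AffineSubspace.vsub_mem_direction hB hA))
    (Submodule.smul_mem _ _ (AffineSubspace.vsub_mem_direction hC hA))

theorem inner_incenterOf_sub_left (A B C : V) (hs : dist B C + dist C A + dist A B ≠ 0) :
    ⟪incenterOf A B C - A, B - C⟫ =
      (dist C A - dist A B) * (dist B C ^ 2 - (dist C A + dist A B) ^ 2) /
        (2 * (dist B C + dist C A + dist A B)) := by
  have hB : ⟪B - A, B - C⟫ = (dist A B ^ 2 + dist B C ^ 2 - dist C A ^ 2) / 2 := by
    rw [real_inner_eq_norm_mul_self_add_norm_mul_self_sub_norm_sub_mul_self_div_two,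
      sub_sub_sub_cancel_left, ← dist_eq_norm, ← dist_eq_norm, ← dist_eq_norm, dist_comm B A]
    ring
  have hC : ⟪C - A, B - C⟫ = (dist A B ^ 2 - dist B C ^ 2 - dist C A ^ 2) / 2 := by
    rw [← neg_sub C B, inner_neg_right,
      real_inner_eq_norm_mul_self_add_norm_mul_self_sub_norm_sub_mul_self_div_two,
      sub_sub_sub_cancel_left, ← dist_eq_norm, ← dist_eq_norm, ← dist_eq_norm, dist_comm B A,
      dist_comm C B]
    ring
  rw [incenterOf_sub_left A B C hs, inner_add_left, real_inner_smul_left, real_inner_smul_left,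
    hB, hC]
  field_simp
  ring

theorem inner_incenterOf_sub_left_eq_zero_iff (A B C : V)
    (h : dist B C < dist C A + dist A B) :
    ⟪incenterOf A B C - A, B - C⟫ = 0 ↔ dist C A = dist A B := by
  have hs : 0 < dist B C + dist C A + dist A B := by linarith [dist_nonneg (x := B) (y := C)]
  have hlt : dist B C ^ 2 - (dist C A + dist A B) ^ 2 < 0 := by
    nlinarith [dist_nonneg (x := B) (y := C)]
  rw [inner_incenterOf_sub_left A B C hs.ne', div_eq_zero_iff, mul_eq_zero, sub_eq_zero]
  simp [hlt.ne, hs.ne']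

end IncenterOf

namespace Affine.Triangle

theorem dist_lt_dist_add_dist {V P : Type*} [NormedAddCommGroup V] [NormedSpace ℝ V]
    [StrictConvexSpace ℝ V] [MetricSpace P] [NormedAddTorsor V P] (t : Triangle ℝ P)
    {i j k : Fin 3} (hij : i ≠ j) (hik : i ≠ k) (hjk : j ≠ k) :
    dist (t.points j) (t.points k) <
      dist (t.points k) (t.points i) + dist (t.points i) (t.points j) := by
  rw [add_comm, dist_comm (t.points k), dist_comm (t.points i)]
  refine dist_lt_dist_add_dist_iff.2 fun hbtw => ?_
  exact (affineIndependent_iff_not_collinear_of_ne hij.symm hjk hik).1 t.independent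
    hbtw.collinear

variable {V P : Type*} [NormedAddCommGroup V] [InnerProductSpace ℝ V] [MetricSpace P]
  [NormedAddTorsor V P]

theorem mem_altitude_iff_inner (t : Triangle ℝ P) {i j k : Fin 3} (hij : i ≠ j) (hik : i ≠ k)
    (hjk : j ≠ k) {p : P} (hp : p ∈ affineSpan ℝ (Set.range t.points)) :
    p ∈ t.altitude i ↔ ⟪p -ᵥ t.points i, t.points j -ᵥ t.points k⟫ = 0 := by
  have hcompl : ({i}ᶜ : Set (Fin 3)) = {j, k} := by grind
  rw [Simplex.altitude_def, AffineSubspace.mem_inf_iff, AffineSubspace.mem_mk',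
    direction_affineSpan, hcompl, Set.image_pair, vectorSpan_pair,
    Submodule.mem_orthogonal_singleton_iff_inner_left]
  exact and_iff_left hp

theorem incenterOf_mem_altitude_iff (t : Triangle ℝ V) {i j k : Fin 3} (hij : i ≠ j)
    (hik : i ≠ k) (hjk : j ≠ k) :
    incenterOf (t.points i) (t.points j) (t.points k) ∈ t.altitude i ↔
      dist (t.points k) (t.points i) = dist (t.points i) (t.points j) := by
  have hlt := t.dist_lt_dist_add_dist hij hik hjk
  have hs : dist (t.points j) (t.points k) + dist (t.points k) (t.points i) +
      dist (t.points i) (t.points j) ≠ 0 := by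
    linarith [dist_nonneg (x := t.points j) (y := t.points k)]
  have hmem : incenterOf (t.points i) (t.points j) (t.points k) ∈
      affineSpan ℝ (Set.range t.points) := by
    refine affineSpan_mono ℝ ?_ (incenterOf_mem_affineSpan _ _ _ hs)
    simp [Set.insert_subset_iff]
  rw [t.mem_altitude_iff_inner hij hik hjk hmem]
  exact inner_incenterOf_sub_left_eq_zero_iff _ _ _ hlt

end Affine.Triangle

/-- The incenter of a triangle in the Euclidean plane coincides with its orthocenter
if and only if the triangle is equilateral. -/
theorem stmt_8 (T : Affine.Triangle ℝ (EuclideanSpace ℝ (Fin 2))) :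
    incenter T = T.orthocenter ↔
      (dist (T.points 0) (T.points 1) = dist (T.points 1) (T.points 2) ∧
        dist (T.points 0) (T.points 1) = dist (T.points 0) (T.points 2)) := by
  have h₀ : incenter T ∈ T.altitude 0 ↔
      dist (T.points 2) (T.points 0) = dist (T.points 0) (T.points 1) :=
    T.incenterOf_mem_altitude_iff (by decide) (by decide) (by decide)
  have h₁ : incenter T ∈ T.altitude 1 ↔
      dist (T.points 0) (T.points 1) = dist (T.points 1) (T.points 2) := by
    rw [show incenter T = incenterOf (T.points 1) (T.points 2) (T.points 0) from
      (incenterOf_rotate _ _ _).symm]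
    exact T.incenterOf_mem_altitude_iff (by decide) (by decide) (by decide)
  rw [dist_comm (T.points 0) (T.points 2)]
  constructor
  · intro h
    rw [h] at h₀ h₁
    exact ⟨h₁.1 T.orthocenter_mem_altitude, (h₀.1 T.orthocenter_mem_altitude).symm⟩
  · rintro ⟨h₀₁, h₀₂⟩
    exact Affine.Triangle.eq_orthocenter_of_forall_mem_altitude (by decide : (0 : Fin 3) ≠ 1)
      (h₀.2 h₀₂.symm) (h₁.2 h₀₁)
end
end

section
/- Let 𝒜 be the set of all triangles in the plane, i.e., all 3-element subsets of ℝ². Let V ∈ 𝒜 and let P ∈ ℝ² be a point such that f(P) = P for every similarity f of ℝ² with f(V) = V. Then there exists a triangle center, i.e., a map 𝔷 : 𝒜 → ℝ² satisfying 𝔷(f(W)) = f(𝔷(W)) for every similarity f of ℝ² and every W ∈ 𝒜 (where f(W) denotes the image set {f(x) : x ∈ W}), such that 𝔷(V) = P. -/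
/-- A similarity of the plane: a bijection `f : ℝ² → ℝ²` such that for some `r > 0`,
`dist (f x) (f y) = r * dist x y` for all `x, y`. -/
def IsSimilarity (f : EuclideanSpace ℝ (Fin 2) → EuclideanSpace ℝ (Fin 2)) : Prop :=
  Function.Bijective f ∧
    ∃ r : ℝ, 0 < r ∧ ∀ x y : EuclideanSpace ℝ (Fin 2), dist (f x) (f y) = r * dist x y

/-- A triangle center: a map `𝔷` from sets of points of the plane to the plane which,
on triangles (3-element subsets of ℝ²), commutes with every similarity acting
pointwise. -/
def IsTriangleCenter
    (Z : Set (EuclideanSpace ℝ (Fin 2)) → EuclideanSpace ℝ (Fin 2)) : Prop :=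
  ∀ f, IsSimilarity f → ∀ W : Set (EuclideanSpace ℝ (Fin 2)), W.ncard = 3 →
    Z (f '' W) = f (Z W)

/-!
On the similarity orbit of `V` send `f '' V` to `f P`; this is well defined precisely because
`P` is fixed by every similarity preserving `V`, and it is equivariant by construction. Off that
orbit use the centroid, which commutes with similarities because, by Mazur–Ulam, they are affine.
-/

open Set Function

section SetCentroid

variable (k : Type*) {V V₂ : Type*} [Field k] [CharZero k] [AddCommGroup V] [Module k V]
  [AddCommGroup V₂] [Module k V₂]

open Classical in
-- Junk value `0` on infinite sets.
noncomputable def setCentroid (W : Set V) : V :=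
  if h : W.Finite then h.toFinset.centroid k id else 0

variable {k}

theorem setCentroid_image {f : V →ᵃ[k] V₂} (hf : Injective f) {W : Set V} (hW : W.Finite)
    (hne : W.Nonempty) : setCentroid k (f '' W) = f (setCentroid k W) := by
  classical
  set s := hW.toFinset
  have hmap : f (s.centroid k id) = s.centroid k f := by
    rw [Finset.centroid_def, Finset.centroid_def, Finset.map_affineCombination _ _ _
      (s.sum_centroidWeights_eq_one_of_nonempty k (by simpa [s] using hne))]
    rfl
  rw [setCentroid, setCentroid, dif_pos (hW.image f), dif_pos hW, hmap]
  exact Finset.centroid_eq_of_inj_on_of_image_eq k _ _ (fun _ _ _ _ h => h)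
    (fun _ _ _ _ h => hf h) (by simp [s])

end SetCentroid

local notation "ℝ²" => EuclideanSpace ℝ (Fin 2)

namespace IsSimilarity

variable {f g : ℝ² → ℝ²}

theorem id : IsSimilarity id :=
  ⟨bijective_id, 1, one_pos, by simp⟩

theorem comp (hg : IsSimilarity g) (hf : IsSimilarity f) : IsSimilarity (g ∘ f) := by
  obtain ⟨hg_bij, s, hs, hg_dist⟩ := hg
  obtain ⟨hf_bij, r, hr, hf_dist⟩ := hf
  exact ⟨hg_bij.comp hf_bij, s * r, by positivity, fun x y => by
    simp only [comp_apply, hg_dist, hf_dist, mul_assoc]⟩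

noncomputable def toEquiv (hf : IsSimilarity f) : ℝ² ≃ ℝ² :=
  Equiv.ofBijective f hf.1

theorem toEquiv_symm_image_image (hf : IsSimilarity f) (s : Set ℝ²) :
    hf.toEquiv.symm '' (f '' s) = s :=
  hf.toEquiv.symm_image_image s

theorem apply_toEquiv_symm (hf : IsSimilarity f) (x : ℝ²) : f (hf.toEquiv.symm x) = x :=
  Equiv.ofBijective_apply_symm_apply f hf.1 x

theorem symm (hf : IsSimilarity f) : IsSimilarity hf.toEquiv.symm := by
  obtain ⟨r, hr, hf_dist⟩ := hf.2
  refine ⟨hf.toEquiv.symm.bijective, r⁻¹, by positivity, fun x y => ?_⟩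
  rw [eq_inv_mul_iff_mul_eq₀ hr.ne', ← hf_dist, hf.apply_toEquiv_symm, hf.apply_toEquiv_symm]

/-- Mazur–Ulam applied to the bijective isometry `r⁻¹ • f`. -/
theorem exists_affineMap_eq (hf : IsSimilarity f) : ∃ A : ℝ² →ᵃ[ℝ] ℝ², ⇑A = f := by
  obtain ⟨hf_bij, r, hr, hf_dist⟩ := hf
  have hiso : Isometry (r⁻¹ • f) := Isometry.of_dist_eq fun x y => by
    rw [Pi.smul_apply, Pi.smul_apply, dist_smul₀, hf_dist, Real.norm_eq_abs,
      abs_of_pos (inv_pos.2 hr), inv_mul_cancel_left₀ hr.ne']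
  let e : ℝ² ≃ᵢ ℝ² :=
    ⟨(Equiv.ofBijective f hf_bij).trans
      (LinearEquiv.smulOfNeZero ℝ ℝ² r⁻¹ (inv_ne_zero hr.ne')).toEquiv, hiso⟩
  refine ⟨r • e.toRealAffineIsometryEquiv.toAffineEquiv.toAffineMap, funext fun x => ?_⟩
  change r • r⁻¹ • f x = f x
  exact smul_inv_smul₀ hr.ne' (f x)

variable {V W : Set ℝ²}

theorem exists_image_eq_of_image_eq (hg : IsSimilarity g) (hf : IsSimilarity f)
    (h : f '' V = g '' W) : ∃ f', IsSimilarity f' ∧ f' '' V = W :=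
  ⟨hg.toEquiv.symm ∘ f, hg.symm.comp hf, by
    rw [image_comp, h, hg.toEquiv_symm_image_image]⟩

theorem apply_eq_apply_of_image_eq {P : ℝ²} (hP : ∀ f, IsSimilarity f → f '' V = V → f P = P)
    (hf : IsSimilarity f) (hg : IsSimilarity g) (h : f '' V = g '' V) : f P = g P := by
  have hfix : (hg.toEquiv.symm ∘ f) '' V = V := by
    rw [image_comp, h, hg.toEquiv_symm_image_image]
  exact hg.toEquiv.symm_apply_eq.1 (hP _ (hg.symm.comp hf) hfix)

end IsSimilarity

theorem isTriangleCenter_setCentroid : IsTriangleCenter (setCentroid ℝ) := by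
  intro f hf W hW
  obtain ⟨A, rfl⟩ := hf.exists_affineMap_eq
  exact setCentroid_image hf.1.1 (finite_of_ncard_ne_zero (by omega))
    (nonempty_of_ncard_ne_zero (by omega))

open Classical in
noncomputable def updateOrbit (V : Set ℝ²) (P : ℝ²) (Z : Set ℝ² → ℝ²) (W : Set ℝ²) : ℝ² :=
  if h : ∃ f, IsSimilarity f ∧ f '' V = W then h.choose P else Z W

section UpdateOrbit

variable {V : Set ℝ²} {P : ℝ²} {Z : Set ℝ² → ℝ²}

theorem updateOrbit_self (hP : ∀ f, IsSimilarity f → f '' V = V → f P = P) :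
    updateOrbit V P Z V = P := by
  have h : ∃ f, IsSimilarity f ∧ f '' V = V := ⟨id, IsSimilarity.id, image_id V⟩
  rw [updateOrbit, dif_pos h]
  exact hP _ h.choose_spec.1 h.choose_spec.2

theorem isTriangleCenter_updateOrbit (hP : ∀ f, IsSimilarity f → f '' V = V → f P = P)
    (hZ : IsTriangleCenter Z) : IsTriangleCenter (updateOrbit V P Z) := by
  intro g hg W hW
  by_cases h : ∃ f, IsSimilarity f ∧ f '' V = W
  · obtain ⟨hf, hfW⟩ := h.choose_spec
    have h' : ∃ f, IsSimilarity f ∧ f '' V = g '' W :=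
      ⟨g ∘ h.choose, hg.comp hf, by rw [image_comp, hfW]⟩
    rw [updateOrbit, updateOrbit, dif_pos h, dif_pos h']
    exact IsSimilarity.apply_eq_apply_of_image_eq hP h'.choose_spec.1 (hg.comp hf)
      (by rw [h'.choose_spec.2, image_comp, hfW])
  · have h' : ¬∃ f, IsSimilarity f ∧ f '' V = g '' W :=
      fun ⟨f, hf, hfW⟩ => h (hg.exists_image_eq_of_image_eq hf hfW)
    rw [updateOrbit, updateOrbit, dif_neg h, dif_neg h']
    exact hZ g hg W hW

end UpdateOrbit

theorem stmt_9_general (V : Set (EuclideanSpace ℝ (Fin 2)))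
    (P : EuclideanSpace ℝ (Fin 2))
    (hP : ∀ f, IsSimilarity f → f '' V = V → f P = P) :
    ∃ Z, IsTriangleCenter Z ∧ Z V = P :=
  ⟨updateOrbit V P (setCentroid ℝ), isTriangleCenter_updateOrbit hP isTriangleCenter_setCentroid,
    updateOrbit_self hP⟩

/-- For every triangle `V` in the plane and every point `P` fixed by all the
similarities fixing `V` (pointwise action on sets), there exists a triangle center
`𝔷` with `𝔷 V = P`. -/
theorem stmt_9 (V : Set (EuclideanSpace ℝ (Fin 2))) (hV : V.ncard = 3)
    (P : EuclideanSpace ℝ (Fin 2))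
    (hP : ∀ f, IsSimilarity f → f '' V = V → f P = P) :
    ∃ Z, IsTriangleCenter Z ∧ Z V = P :=
  stmt_9_general V P hP
end

section
/- Fix n ≥ 1 and let 𝒜 be the family of all (n+1)-element subsets of Euclidean n-space ℝⁿ (called simplices). Let V ∈ 𝒜 and let P ∈ ℝⁿ be a point such that g(P) = P for every isometry g of ℝⁿ with g(V) = V. Then there exists a center, i.e., a map 𝔷 : 𝒜 → ℝⁿ satisfying 𝔷(g(W)) = g(𝔷(W)) for every isometry g of ℝⁿ and every W ∈ 𝒜, such that 𝔷(V) = P. -/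
/-!
On the orbit of `V` under the isometry group put `𝔷 (g V) := g P`; this is well defined
precisely because the stabilizer of `V` fixes `P`. Off that orbit any equivariant choice
will do, and the centroid of the vertices is one, since isometries of a real normed space
are affine (Mazur–Ulam).
-/

open scoped Classical

/-- A center for simplices in ℝⁿ: a map `𝔷` from finite subsets of ℝⁿ to ℝⁿ which,
on (n+1)-element subsets (simplices), commutes with every isometry of ℝⁿ acting
pointwise. -/
def IsSimplexCenter (n : ℕ)
    (Z : Finset (EuclideanSpace ℝ (Fin n)) → EuclideanSpace ℝ (Fin n)) : Prop :=
  ∀ (g : EuclideanSpace ℝ (Fin n) ≃ᵢ EuclideanSpace ℝ (Fin n))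
    (W : Finset (EuclideanSpace ℝ (Fin n))), W.card = n + 1 →
      Z (W.image g) = g (Z W)

open MulAction
open scoped Pointwise

section EquivariantExtension

variable {G α β : Type*} [Group G] [MulAction G α] [MulAction G β]

lemma smul_eq_smul_of_stabilizer_le {a : α} {b : β} (hab : stabilizer G a ≤ stabilizer G b)
    {g h : G} (hgh : g • a = h • a) : g • b = h • b := by
  have hmem : h⁻¹ * g ∈ stabilizer G a := by
    rw [mem_stabilizer_iff, mul_smul, hgh, inv_smul_smul]
  have := mem_stabilizer_iff.mp (hab hmem)
  rwa [mul_smul, inv_smul_eq_iff] at this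

theorem exists_equivariantOn_apply_eq (s : Set α) (c : α → β)
    (hc : ∀ g : G, ∀ x ∈ s, c (g • x) = g • c x) (a : α) (b : β)
    (hab : stabilizer G a ≤ stabilizer G b) :
    ∃ f : α → β, (∀ g : G, ∀ x ∈ s, f (g • x) = g • f x) ∧ f a = b := by
  let f : α → β := fun x => if h : ∃ g : G, g • a = x then h.choose • b else c x
  have f_smul_self (g : G) : f (g • a) = g • b := by
    have h : ∃ g' : G, g' • a = g • a := ⟨g, rfl⟩
    simp only [f, dif_pos h]
    exact smul_eq_smul_of_stabilizer_le hab h.choose_spec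
  refine ⟨f, fun g x hx => ?_, by simpa using f_smul_self 1⟩
  by_cases horbit : ∃ h : G, h • a = x
  · obtain ⟨h, rfl⟩ := horbit
    rw [smul_smul, f_smul_self, f_smul_self, mul_smul]
  · have horbit' : ¬∃ h : G, h • a = g • x := fun ⟨h, hh⟩ =>
      horbit ⟨g⁻¹ * h, by rw [mul_smul, hh, inv_smul_smul]⟩
    simp only [f, dif_neg horbit, dif_neg horbit']
    exact hc g x hx

end EquivariantExtension

theorem Finset.centroid_image_of_injective {k V P V₂ P₂ : Type*} [DivisionRing k] [CharZero k]
    [AddCommGroup V] [Module k V] [AddTorsor V P] [AddCommGroup V₂] [Module k V₂]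
    [AddTorsor V₂ P₂] [DecidableEq P₂] (f : P →ᵃ[k] P₂) (hf : Function.Injective f)
    {s : Finset P} (hs : s.Nonempty) :
    (s.image f).centroid k id = f (s.centroid k id) := by
  have himage : s.image f = s.map ⟨f, hf⟩ := by ext; simp
  rw [himage, centroid_map, centroid_def, centroid_def,
    s.map_affineCombination _ _ (s.sum_centroidWeights_eq_one_of_nonempty k hs)]
  rfl

theorem IsometryEquiv.centroid_image {E : Type*} [NormedAddCommGroup E] [NormedSpace ℝ E]
    [DecidableEq E] (g : E ≃ᵢ E) {W : Finset E} (hW : W.Nonempty) :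
    (W.image g).centroid ℝ id = g (W.centroid ℝ id) :=
  W.centroid_image_of_injective g.toRealAffineIsometryEquiv.toAffineMap g.injective hW

-- With this action the pointwise `g • W` on finsets is definitionally `W.image g`.
instance IsometryEquiv.applyMulAction {α : Type*} [PseudoEMetricSpace α] :
    MulAction (α ≃ᵢ α) α where
  smul g x := g x
  one_smul _ := rfl
  mul_smul _ _ _ := rfl

theorem stmt_11_general (n : ℕ)
    (V : Finset (EuclideanSpace ℝ (Fin n)))
    (P : EuclideanSpace ℝ (Fin n))
    (hP : ∀ g : EuclideanSpace ℝ (Fin n) ≃ᵢ EuclideanSpace ℝ (Fin n),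
      V.image g = V → g P = P) :
    ∃ Z, IsSimplexCenter n Z ∧ Z V = P := by
  obtain ⟨Z, hZ, hZV⟩ := exists_equivariantOn_apply_eq {W | W.Nonempty}
    (fun W => W.centroid ℝ id) (fun g W hW => g.centroid_image hW) V P hP
  exact ⟨Z, fun g W hW => hZ g W (Finset.card_pos.mp (by omega)), hZV⟩

/-- For `n ≥ 1`, a simplex `V` in ℝⁿ and a point `P` fixed by all the isometries of
ℝⁿ fixing `V` (pointwise action on sets), there exists a center `𝔷` with `𝔷 V = P`. -/
theorem stmt_11 (n : ℕ) (hn : 1 ≤ n)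
    (V : Finset (EuclideanSpace ℝ (Fin n))) (hV : V.card = n + 1)
    (P : EuclideanSpace ℝ (Fin n))
    (hP : ∀ g : EuclideanSpace ℝ (Fin n) ≃ᵢ EuclideanSpace ℝ (Fin n),
      V.image g = V → g P = P) :
    ∃ Z, IsSimplexCenter n Z ∧ Z V = P :=
  stmt_11_general n V P hP
end

section
/- Fix n ≥ 1 and let 𝒜 be the family of all (n+1)-element subsets of Euclidean n-space ℝⁿ (called simplices). Let V ∈ 𝒜 be affinely independent and not equifacetal, i.e., there exist v, w ∈ V such that no isometry g of ℝⁿ satisfies g(V \ {v}) = V \ {w}. Then there exists a center 𝔷 : 𝒜 → ℝⁿ such that 𝔷(V) is different from the centroid of V. -/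
open scoped Classical

variable {n : ℕ}

local notation "E" => EuclideanSpace ℝ (Fin n)

lemma aux_centroid_image (g : EuclideanSpace ℝ (Fin n) ≃ᵢ EuclideanSpace ℝ (Fin n))
    (W : Finset (EuclideanSpace ℝ (Fin n))) (hW : W.Nonempty) :
    (W.image ⇑g).centroid ℝ id = g (W.centroid ℝ id) := by
  have h1 : W.centroid ℝ ⇑g = (W.image ⇑g).centroid ℝ id := by
    refine Finset.centroid_eq_of_inj_on_of_image_eq (k := ℝ) (s := W) (s₂ := W.image ⇑g) (p := ⇑g) (p₂ := id) (fun i _ j _ h => g.injective h)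
      (fun i _ j _ h => h) ?_
    simp [Finset.coe_image]
  rw [← h1, Finset.centroid_def, Finset.centroid_def]
  have := W.map_affineCombination id (W.centroidWeights ℝ)
      (W.sum_centroidWeights_eq_one_of_nonempty ℝ hW)
      g.toRealAffineIsometryEquiv.toAffineEquiv.toAffineMap
  simpa [IsometryEquiv.coeFn_toRealAffineIsometryEquiv] using this.symm

lemma aux_centroid_ne (V O : Finset (EuclideanSpace ℝ (Fin n)))
    (hindep : AffineIndependent ℝ (fun v : V => (v : EuclideanSpace ℝ (Fin n))))
    (hO : O ⊆ V) (v w : EuclideanSpace ℝ (Fin n)) (hv : v ∈ O) (hw : w ∈ V) (hwO : w ∉ O) :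
    O.centroid ℝ id ≠ V.centroid ℝ id := by
  intro h
  set p : V → EuclideanSpace ℝ (Fin n) := fun x => (x : EuclideanSpace ℝ (Fin n)) with hp
  set fsO : Finset V := Finset.univ.filter (fun x : V => (x : EuclideanSpace ℝ (Fin n)) ∈ O)
    with hfsO
  have hvO : (⟨v, hO hv⟩ : V) ∈ fsO := by simp [hfsO, hv]
  have h1 : fsO.centroid ℝ p = O.centroid ℝ id := by
    refine Finset.centroid_eq_of_inj_on_of_image_eq (k := ℝ) (s := fsO) (s₂ := O)
      (p := p) (p₂ := id) (fun i _ j _ hij => Subtype.ext hij) (fun i _ j _ hij => hij) ?_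
    ext x
    simp only [Finset.coe_filter, Set.mem_image, Set.mem_setOf_eq, Finset.mem_coe,
      Set.image_id, hp, hfsO]
    constructor
    · rintro ⟨⟨y, hy⟩, ⟨_, h2⟩, rfl⟩; exact h2
    · intro hx; exact ⟨⟨x, hO hx⟩, ⟨Finset.mem_univ _, hx⟩, rfl⟩
  have h2 : (Finset.univ : Finset V).centroid ℝ p = V.centroid ℝ id :=
    Finset.centroid_univ ℝ V
  rw [← h1, ← h2] at h
  rw [Finset.centroid_eq_affineCombination_fintype, Finset.centroid_eq_affineCombination_fintype]
    at h
  have ha := (affineIndependent_iff_indicator_eq_of_affineCombination_eq ℝ p).1 hindep _ _ _ _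
    (fsO.sum_centroidWeightsIndicator_eq_one_of_nonempty ℝ ⟨_, hvO⟩)
    (Finset.univ.sum_centroidWeightsIndicator_eq_one_of_nonempty ℝ
      ⟨⟨v, hO hv⟩, Finset.mem_univ _⟩) h
  have hwV : (⟨w, hw⟩ : V) ∉ fsO := by simp [hfsO, hwO]
  have := congrFun ha (⟨w, hw⟩ : V)
  simp only [Finset.coe_univ, Set.indicator_univ, Finset.centroidWeightsIndicator_def,
    Finset.centroidWeights] at this
  rw [Set.indicator_of_notMem (fun hc => hwV (Finset.mem_coe.mp hc))] at this
  have hcard : ((Finset.univ : Finset V).card : ℝ) ≠ 0 := by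
    simp only [Finset.card_univ, Fintype.card_coe]
    exact_mod_cast Finset.card_ne_zero_of_mem hw
  exact hcard (inv_eq_zero.mp this.symm)

lemma aux_trans_coe {α β γ : Type*} [PseudoEMetricSpace α] [PseudoEMetricSpace β]
    [PseudoEMetricSpace γ] (g : α ≃ᵢ β) (h : β ≃ᵢ γ) : ⇑(g.trans h) = ⇑h ∘ ⇑g := rfl

lemma aux_refl_coe {α : Type*} [PseudoEMetricSpace α] :
    ⇑(IsometryEquiv.refl α) = id := rfl

/-- For `n ≥ 1`, if `V` is an affinely independent simplex in ℝⁿ which is not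
equifacetal (some two of its facets `V \ {v}`, `V \ {w}` are not congruent), then
there exists a center `𝔷` such that `𝔷 V` differs from the centroid of `V`. -/
theorem stmt_13 (n : ℕ) (hn : 1 ≤ n)
    (V : Finset (EuclideanSpace ℝ (Fin n))) (hV : V.card = n + 1)
    (hindep : AffineIndependent ℝ (fun v : V => (v : EuclideanSpace ℝ (Fin n))))
    (hne : ∃ v ∈ V, ∃ w ∈ V,
      ∀ g : EuclideanSpace ℝ (Fin n) ≃ᵢ EuclideanSpace ℝ (Fin n),
        (V.erase v).image g ≠ V.erase w) :
    ∃ Z, IsSimplexCenter n Z ∧ Z V ≠ V.centroid ℝ id := by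
  obtain ⟨v, hv, w, hw, hvw⟩ := hne
  set O : Finset (EuclideanSpace ℝ (Fin n)) := V.filter
    (fun u => ∃ g : EuclideanSpace ℝ (Fin n) ≃ᵢ EuclideanSpace ℝ (Fin n),
      V.image ⇑g = V ∧ g v = u) with hOdef
  have hvO : v ∈ O := Finset.mem_filter.mpr ⟨hv, IsometryEquiv.refl _, by rw [aux_refl_coe, Finset.image_id], rfl⟩
  have hwO : w ∉ O := by
    intro hwO
    obtain ⟨-, g, hgV, hgv⟩ := Finset.mem_filter.mp hwO
    refine hvw g ?_
    rw [Finset.image_erase g.injective, hgV, hgv]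
  set p := O.centroid ℝ id with hpdef
  have hOne : O.Nonempty := ⟨v, hvO⟩
  have hfix : ∀ h : EuclideanSpace ℝ (Fin n) ≃ᵢ EuclideanSpace ℝ (Fin n),
      V.image ⇑h = V → h p = p := by
    intro h hh
    have himage : O.image ⇑h = O := by
      ext u
      simp only [Finset.mem_image]
      constructor
      · rintro ⟨u₀, hu₀, rfl⟩
        obtain ⟨hu₀V, g, hgV, hgv⟩ := Finset.mem_filter.mp hu₀
        refine Finset.mem_filter.mpr ⟨?_, g.trans h, ?_, ?_⟩
        · rw [← hh]; exact Finset.mem_image_of_mem _ hu₀V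
        · rw [aux_trans_coe, ← Finset.image_image, hgV, hh]
        · simp [hgv]
      · intro hu
        obtain ⟨huV, g, hgV, hgv⟩ := Finset.mem_filter.mp hu
        have hsu : h.symm u ∈ V := by
          rw [← hh] at huV
          obtain ⟨x, hx, rfl⟩ := Finset.mem_image.mp huV
          simpa using hx
        refine ⟨h.symm u, Finset.mem_filter.mpr ⟨hsu, g.trans h.symm, ?_, by simp [hgv]⟩,
          by simp⟩
        rw [aux_trans_coe, ← Finset.image_image, hgV]
        nth_rewrite 1 [← hh]
        rw [Finset.image_image, show ⇑h.symm ∘ ⇑h = id from funext fun x => h.symm_apply_apply x,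
          Finset.image_id]
    calc h p = (O.image ⇑h).centroid ℝ id := (aux_centroid_image h O hOne).symm
      _ = p := by rw [himage]
  have hpne : p ≠ V.centroid ℝ id :=
    aux_centroid_ne V O hindep (Finset.filter_subset _ _) v w hvO hw hwO
  refine ⟨fun W =>
    if h : ∃ g : EuclideanSpace ℝ (Fin n) ≃ᵢ EuclideanSpace ℝ (Fin n), V.image ⇑g = W
    then h.choose p else W.centroid ℝ id, ?_, ?_⟩
  · intro g W hWcard
    by_cases hex : ∃ g' : EuclideanSpace ℝ (Fin n) ≃ᵢ EuclideanSpace ℝ (Fin n),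
      V.image ⇑g' = W
    · have hex2 : ∃ g'' : EuclideanSpace ℝ (Fin n) ≃ᵢ EuclideanSpace ℝ (Fin n),
          V.image ⇑g'' = W.image ⇑g :=
        ⟨hex.choose.trans g, by
          rw [aux_trans_coe, ← Finset.image_image, hex.choose_spec]⟩
      simp only [dif_pos hex, dif_pos hex2]
      have h1 : V.image ⇑hex.choose = W := hex.choose_spec
      have h2 : V.image ⇑hex2.choose = W.image ⇑g := hex2.choose_spec
      have key : V.image ⇑((hex.choose.trans g).trans hex2.choose.symm) = V := by
        calc V.image ⇑((hex.choose.trans g).trans hex2.choose.symm)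
            = ((V.image ⇑hex.choose).image ⇑g).image ⇑hex2.choose.symm := by
              rw [aux_trans_coe, aux_trans_coe, ← Finset.image_image, ← Finset.image_image]
          _ = (W.image ⇑g).image ⇑hex2.choose.symm := by rw [h1]
          _ = (V.image ⇑hex2.choose).image ⇑hex2.choose.symm := congrArg _ h2.symm
          _ = V := by
              rw [Finset.image_image,
                show ⇑hex2.choose.symm ∘ ⇑hex2.choose = id from
                  funext fun x => hex2.choose.symm_apply_apply x, Finset.image_id]
      have hk := hfix _ key
      simp only [aux_trans_coe, Function.comp_apply] at hk
      have := congrArg hex2.choose hk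
      rw [IsometryEquiv.apply_symm_apply] at this
      exact this.symm
    · have hex2 : ¬ ∃ g'' : EuclideanSpace ℝ (Fin n) ≃ᵢ EuclideanSpace ℝ (Fin n),
          V.image ⇑g'' = W.image ⇑g := by
        rintro ⟨g'', hg''⟩
        refine hex ⟨g''.trans g.symm, ?_⟩
        rw [aux_trans_coe, ← Finset.image_image, hg'', Finset.image_image,
          show ⇑g.symm ∘ ⇑g = id from funext fun x => g.symm_apply_apply x, Finset.image_id]
      simp only [dif_neg hex, dif_neg hex2]
      exact aux_centroid_image g W (Finset.card_pos.mp (by omega))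
  · have hexV : ∃ g : EuclideanSpace ℝ (Fin n) ≃ᵢ EuclideanSpace ℝ (Fin n),
        V.image ⇑g = V := ⟨IsometryEquiv.refl _, by rw [aux_refl_coe, Finset.image_id]⟩
    simp only [dif_pos hexV]
    rw [hfix _ hexV.choose_spec]
    exact hpne
end
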